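/- arXiv:1509.01887 — 2 statements merged into one kernel-verified Lean document; each statement's English description precedes it below -/
import Mathlib

section
/- Let p,q,r,s be positive integers with gcd(p,q) = gcd(r,s) = 1. If s | p, p | (rq+1), and gcd((rq+1)/p, s) = 1, then q is a period of the Ehrhart quasipolynomial of the triangle with vertices (0,0), (p/q, 0), (0, r/s): i.e., there exist rationals A, B and a function c of period q such that #{(x,y)∈ℤ_{≥0}² : (q/p)x + (s/r)y ≤ t} = At² + Bt + c(t) for all positive integers t. -/
noncomputable def ehrhart (u v : ℝ) (t : ℕ) : ℕ :=
  {p : ℕ × ℕ | u * p.1 + v * p.2 ≤ t}.ncard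

/-!
Clearing denominators, `ehrhart (q/p) (s/r) t` counts `(x, y) ∈ ℕ²` with `r q x + p s y ≤ p r t`.
Raising the bound by `r q` adds one column of points, so `t ↦ t + q` adds `p` columns:
the difference is `∑_{i < p} (⌊(p r t + (i + 1) r q) / (p s)⌋ + 1)`. Writing `r q + 1 = p (k + 1)`,
the `i`-th floor is `⌊(r t + k + i (k + 1)) / s⌋`. Since `k + 1` is prime to `s` and `s ∣ p`, these
numerators run `p / s` times through a complete residue system mod `s` whatever `t` is, so the
fractional parts always sum to the same constant and the difference is affine in `t`. A function
whose `q`-step differences are affine in `t` is a quadratic polynomial plus a `q`-periodic function.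
-/

open Finset Function

theorem Function.Periodic.sum_range_mul {M : Type*} [AddCommMonoid M] {g : ℕ → M} {s : ℕ}
    (hg : Periodic g s) (m : ℕ) : ∑ i ∈ range (s * m), g i = m • ∑ i ∈ range s, g i := by
  induction m with
  | zero => simp
  | succ m ih =>
    rw [Nat.mul_succ, sum_range_add, ih, succ_nsmul]
    congr 1
    refine sum_congr rfl fun j _ => ?_
    rw [add_comm, mul_comm]
    exact hg.nat_mul m j

theorem Nat.sum_range_add_mul_mod {k s : ℕ} (hk : k.Coprime s) (c : ℕ) :
    ∑ i ∈ range s, (c + i * k) % s = ∑ j ∈ range s, j := by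
  rcases s.eq_zero_or_pos with rfl | hs
  · simp
  have hmaps : ∀ i ∈ range s, (c + i * k) % s ∈ range s :=
    fun i _ => mem_range.2 (Nat.mod_lt _ hs)
  have hinj : Set.InjOn (fun i => (c + i * k) % s) (range s) := fun i hi j hj hij =>
    ((Nat.ModEq.add_left_cancel' c hij).cancel_right_of_coprime hk.symm).eq_of_lt_of_lt
      (mem_range.1 hi) (mem_range.1 hj)
  exact sum_nbij _ hmaps hinj (surjOn_of_injOn_of_card_le _ hmaps hinj le_rfl) fun _ _ => rfl

theorem Nat.sum_range_mul_add_mul_mod {k s : ℕ} (hk : k.Coprime s) (c m : ℕ) :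
    ∑ i ∈ range (s * m), (c + i * k) % s = m * ∑ j ∈ range s, j := by
  have hper : Periodic (fun i => (c + i * k) % s) s := fun i => by
    simp only [add_mul, ← add_assoc, Nat.add_mul_mod_self_left]
  rw [hper.sum_range_mul, Nat.sum_range_add_mul_mod hk, smul_eq_mul]

theorem Nat.sum_range_cast_add_mul_div {K : Type*} [Field K] [CharZero K] {k s n : ℕ}
    (hk : k.Coprime s) (hsn : s ∣ n) (c : ℕ) :
    ∑ i ∈ range n, (((c + i * k) / s : ℕ) : K)
      = ∑ i ∈ range n, ((c + i * k : ℕ) : K) / s - n * (s - 1) / (2 * s) := by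
  obtain ⟨m, rfl⟩ := hsn
  rcases s.eq_zero_or_pos with rfl | hs
  · simp
  have hs' : (s : K) ≠ 0 := Nat.cast_ne_zero.2 hs.ne'
  have hterm (a : ℕ) : ((a / s : ℕ) : K) = (a : K) / s - ((a % s : ℕ) : K) / s := by
    rw [eq_sub_iff_add_eq, eq_div_iff hs', add_mul, div_mul_cancel₀ _ hs']
    exact_mod_cast Nat.div_add_mod' a s
  have hgauss : (∑ j ∈ range s, (j : K)) * 2 = s * (s - 1) := by
    rw [← Nat.cast_pred hs, ← Nat.cast_mul, ← sum_range_id_mul_two s]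
    push_cast
    rfl
  simp_rw [hterm, sum_sub_distrib, ← sum_div, sub_right_inj,
    ← Nat.cast_sum (s := range (s * m)) (fun i => (c + i * k) % s),
    Nat.sum_range_mul_add_mul_mod hk]
  push_cast
  field_simp
  linear_combination m * hgauss

theorem Nat.mul_add_div_mul_of_lt {p j : ℕ} (hj : j < p) (X s : ℕ) :
    (p * X + j) / (p * s) = X / s := by
  rw [← Nat.div_div_eq_div_mul, Nat.mul_add_div (by omega), Nat.div_eq_of_lt hj, add_zero]

noncomputable def latticeCount (a b M : ℕ) : ℕ :=
  {z : ℕ × ℕ | a * z.1 + b * z.2 ≤ M}.ncard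

theorem finite_setOf_mul_add_mul_le {a b : ℕ} (ha : 0 < a) (hb : 0 < b) (M : ℕ) :
    {z : ℕ × ℕ | a * z.1 + b * z.2 ≤ M}.Finite :=
  (Set.finite_Iic (M, M)).subset fun z (hz : _ ≤ M) =>
    ⟨show z.1 ≤ M by nlinarith, show z.2 ≤ M by nlinarith⟩

theorem latticeCount_add_left {a b : ℕ} (ha : 0 < a) (hb : 0 < b) (M : ℕ) :
    latticeCount a b (M + a) = latticeCount a b M + ((M + a) / b + 1) := by
  have hsplit : {z : ℕ × ℕ | a * z.1 + b * z.2 ≤ M + a}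
      = Prod.map Nat.succ id '' {z | a * z.1 + b * z.2 ≤ M}
        ∪ Prod.mk 0 '' Set.Iic ((M + a) / b) := by
    ext ⟨_ | x, y⟩
    · simp [Nat.le_div_iff_mul_le hb, mul_comm]
    · simp [mul_add, add_right_comm _ a]
  have hdisj : Disjoint (Prod.map Nat.succ id '' {z : ℕ × ℕ | a * z.1 + b * z.2 ≤ M})
      (Prod.mk 0 '' Set.Iic ((M + a) / b)) := by
    rw [Set.disjoint_left]
    rintro _ ⟨z, -, rfl⟩ ⟨y, -, h⟩
    exact (Nat.succ_ne_zero _) (congrArg Prod.fst h).symm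
  unfold latticeCount
  rw [hsplit, Set.ncard_union_eq hdisj ((finite_setOf_mul_add_mul_le ha hb M).image _)
      ((Set.finite_Iic _).image _),
    Set.ncard_image_of_injective _ (Nat.succ_injective.prodMap injective_id),
    Set.ncard_image_of_injective _ (Prod.mk_right_injective 0), ← coe_Iic, Set.ncard_coe_finset,
    Nat.card_Iic]

theorem latticeCount_add_mul {a b : ℕ} (ha : 0 < a) (hb : 0 < b) (M J : ℕ) :
    latticeCount a b (M + J * a)
      = latticeCount a b M + ∑ i ∈ range J, ((M + (i + 1) * a) / b + 1) := by
  induction J with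
  | zero => simp
  | succ J ih =>
    rw [sum_range_succ, ← add_assoc, ← ih, add_one_mul, ← add_assoc,
      latticeCount_add_left ha hb]

theorem ehrhart_div_eq_latticeCount {p q r s : ℕ} (hp : 0 < p) (hr : 0 < r) (t : ℕ) :
    ehrhart ((q : ℝ) / p) ((s : ℝ) / r) t = latticeCount (r * q) (p * s) (p * r * t) := by
  unfold ehrhart latticeCount
  congr 1
  ext z
  simp only [Set.mem_ofPred_eq]
  rw [← Nat.cast_le (α := ℝ), ← mul_le_mul_iff_of_pos_left (by positivity : (0 : ℝ) < p * r)]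
  push_cast
  field_simp

theorem exists_quadratic_add_periodic {K : Type*} [Field K] [CharZero K] {f : ℕ → K} {q : ℕ}
    (hq : 0 < q) {α β : K} (hf : ∀ t, f (t + q) = f t + α * t + β) :
    ∃ A B : K, ∃ c : ℕ → K,
      (∀ t, c (t + q) = c t) ∧ ∀ t, f t = A * t ^ 2 + B * t + c t := by
  have hq' : (q : K) ≠ 0 := Nat.cast_ne_zero.2 hq.ne'
  refine ⟨α / (2 * q), β / q - α / 2, fun t => f t - α / (2 * q) * t ^ 2 - (β / q - α / 2) * t,
    fun t => ?_, fun t => by ring⟩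
  dsimp only
  rw [hf]
  push_cast
  field_simp
  ring

theorem exists_ehrhart_add_eq_affine {p q r s k : ℕ} (hp : 0 < p) (hq : 0 < q) (hr : 0 < r)
    (hs : 0 < s) (hsp : s ∣ p) (hk : r * q + 1 = p * k) (hks : k.Coprime s) :
    ∃ α β : ℚ, ∀ t : ℕ, (ehrhart ((q : ℝ) / p) ((s : ℝ) / r) (t + q) : ℚ)
      = ehrhart ((q : ℝ) / p) ((s : ℝ) / r) t + α * t + β := by
  obtain ⟨k, rfl⟩ : ∃ k', k = k' + 1 :=
    Nat.exists_eq_add_one.2 (Nat.pos_of_ne_zero (by rintro rfl; simp at hk))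
  have hfloor : ∀ t, ∀ i < p,
      (p * r * t + (i + 1) * (r * q)) / (p * s) = (r * t + k + i * (k + 1)) / s := by
    intro t i hi
    obtain ⟨d, rfl⟩ := Nat.exists_eq_add_of_lt hi
    -- `r q ≡ -1 (mod p)` makes the numerator `p (r t + k + i (k + 1)) + (p - 1 - i)`
    rw [← Nat.mul_add_div_mul_of_lt (by omega : d < i + d + 1) (r * t + k + i * (k + 1)) s]
    congr 1
    zify at hk ⊢
    linear_combination (↑i + 1 : ℤ) * hk
  refine ⟨p * r / s, p + ∑ i ∈ range p, ((k : ℚ) + i * (k + 1)) / s - p * (s - 1) / (2 * s),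
    fun t => ?_⟩
  rw [ehrhart_div_eq_latticeCount hp hr, ehrhart_div_eq_latticeCount hp hr,
    show p * r * (t + q) = p * r * t + p * (r * q) by ring,
    latticeCount_add_mul (by positivity) (by positivity),
    sum_congr rfl fun i hi => by rw [hfloor t i (mem_range.1 hi)]]
  simp only [Nat.cast_add, Nat.cast_sum, Nat.cast_one, sum_add_distrib]
  rw [Nat.sum_range_cast_add_mul_div hks hsp]
  push_cast
  simp only [add_assoc, add_div, sum_add_distrib, sum_const, card_range, nsmul_eq_mul]
  ring

theorem stmt_11_general (p q r s : ℕ) (hp : 0 < p) (hq : 0 < q) (hr : 0 < r) (hs : 0 < s)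
    (h1 : s ∣ p) (h2 : p ∣ (r * q + 1)) (h3 : Nat.gcd ((r * q + 1) / p) s = 1) :
    ∃ A B : ℚ, ∃ c : ℕ → ℚ, (∀ t : ℕ, c (t + q) = c t) ∧
      ∀ t : ℕ, 0 < t →
        (ehrhart ((q : ℝ) / p) ((s : ℝ) / r) t : ℚ) = A * t ^ 2 + B * t + c t := by
  obtain ⟨k, hk⟩ := h2
  rw [hk, Nat.mul_div_cancel_left k hp] at h3
  obtain ⟨α, β, hαβ⟩ := exists_ehrhart_add_eq_affine hp hq hr hs h1 hk h3
  obtain ⟨A, B, c, hc, hf⟩ :=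
    exists_quadratic_add_periodic (f := fun t => (ehrhart _ _ t : ℚ)) hq hαβ
  exact ⟨A, B, c, hc, fun t _ => hf t⟩

/-- Criterion for period collapse: `q` is a period of the Ehrhart
quasipolynomial of the triangle with vertices `(0,0), (p/q,0), (0,r/s)`. -/
theorem stmt_11 (p q r s : ℕ) (hp : 0 < p) (hq : 0 < q) (hr : 0 < r) (hs : 0 < s)
    (hpq : Nat.gcd p q = 1) (hrs : Nat.gcd r s = 1)
    (h1 : s ∣ p) (h2 : p ∣ (r * q + 1)) (h3 : Nat.gcd ((r * q + 1) / p) s = 1) :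
    ∃ A B : ℚ, ∃ c : ℕ → ℚ, (∀ t : ℕ, c (t + q) = c t) ∧
      ∀ t : ℕ, 0 < t →
        (ehrhart ((q : ℝ) / p) ((s : ℝ) / r) t : ℚ) = A * t ^ 2 + B * t + c t :=
  stmt_11_general p q r s hp hq hr hs h1 h2 h3
end

section
/- Suppose the triangle with vertices (0,0), (a,0), (0,b) (a,b positive reals) has Ehrhart function (t+1)² for all positive integers t. Then the tetrahedron with vertices (0,0,0), (1/2,0,0), (0,a,0), (0,0,b) has Ehrhart function f(t) = t³/6 + t² + 11t/6 + 1 for all positive integers t. -/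
noncomputable def ehrhart2 (u v : ℝ) (t : ℕ) : ℕ :=
  {p : ℕ × ℕ | u * p.1 + v * p.2 ≤ t}.ncard

noncomputable def ehrhart3 (a b c : ℝ) (t : ℕ) : ℕ :=
  {p : ℕ × ℕ × ℕ | a * p.1 + b * p.2.1 + c * p.2.2 ≤ t}.ncard

/-! Slicing the tetrahedron `2x + y/a + z/b ≤ t` along `x` leaves the triangles of the
dilations `t - 2x`, which hold `(t - 2x + 1)²` lattice points each (for `t - 2x = 0`, which the
hypothesis does not cover, the triangle is the single point `0`), and
`6 ∑_{x ≤ t/2} (t - 2x + 1)² = (t + 1)(t + 2)(t + 3)`. -/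

open Finset

section Slicing

variable {u v : ℝ}

theorem finite_setOf_add_le (hu : 0 < u) (hv : 0 < v) (s : ℝ) :
    {p : ℕ × ℕ | u * p.1 + v * p.2 ≤ s}.Finite := by
  refine (Set.finite_Iic (⌊s / u⌋₊, ⌊s / v⌋₊)).subset fun p hp => ?_
  have hp1 : 0 ≤ u * p.1 := by positivity
  have hp2 : 0 ≤ v * p.2 := by positivity
  have hp : u * p.1 + v * p.2 ≤ s := hp
  exact ⟨Nat.le_floor ((le_div_iff₀' hu).2 (by linarith)),
    Nat.le_floor ((le_div_iff₀' hv).2 (by linarith))⟩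

theorem ehrhart2_zero (hu : 0 < u) (hv : 0 < v) : ehrhart2 u v 0 = 1 := by
  rw [ehrhart2, Set.ncard_eq_one]
  refine ⟨(0, 0), Set.ext fun ⟨x, y⟩ => ?_⟩
  simp only [Set.mem_ofPred_eq, Set.mem_singleton_iff, Prod.mk.injEq, Nat.cast_zero]
  constructor
  · intro h
    have hx : 0 ≤ u * x := by positivity
    have hy : 0 ≤ v * y := by positivity
    have hx0 : u * x = 0 := by linarith
    have hy0 : v * y = 0 := by linarith
    simpa [hu.ne', hv.ne'] using And.intro hx0 hy0
  · rintro ⟨rfl, rfl⟩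
    simp

theorem mul_add_add_le_iff_le_sub (hu : 0 < u) (hv : 0 < v) (c x y z t : ℕ) :
    (c : ℝ) * x + u * y + v * z ≤ t ↔ c * x ≤ t ∧ u * y + v * z ≤ ((t - c * x : ℕ) : ℝ) := by
  have hyz : 0 ≤ u * y + v * z := by positivity
  constructor
  · intro h
    have hcx : c * x ≤ t := by exact_mod_cast (show (c : ℝ) * x ≤ t by linarith)
    refine ⟨hcx, ?_⟩
    push_cast [Nat.cast_sub hcx]
    linarith
  · rintro ⟨hcx, h⟩
    push_cast [Nat.cast_sub hcx] at h
    linarith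

theorem ehrhart3_eq_sum_ehrhart2 (hu : 0 < u) (hv : 0 < v) {c : ℕ} (hc : 0 < c) (t : ℕ) :
    ehrhart3 c u v t = ∑ x ∈ range (t / c + 1), ehrhart2 u v (t - c * x) := by
  classical
  let slice (s : ℕ) : Finset (ℕ × ℕ) := (finite_setOf_add_le hu hv s).toFinset
  have hset : {p : ℕ × ℕ × ℕ | (c : ℝ) * p.1 + u * p.2.1 + v * p.2.2 ≤ t} =
      ↑((range (t / c + 1)).biUnion fun x => {x} ×ˢ slice (t - c * x)) := by
    ext ⟨x, y, z⟩
    simp [slice, mul_add_add_le_iff_le_sub hu hv, Nat.le_div_iff_mul_le hc, mul_comm, and_comm]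
  have hdisj : (range (t / c + 1) : Set ℕ).PairwiseDisjoint
      fun x => {x} ×ˢ slice (t - c * x) := fun x _ y _ hxy =>
    disjoint_product.2 (Or.inl (disjoint_singleton.2 hxy))
  rw [ehrhart3, hset, Set.ncard_coe_finset, card_biUnion hdisj]
  refine sum_congr rfl fun x _ => ?_
  rw [card_product, card_singleton, one_mul, ehrhart2,
    Set.ncard_eq_toFinset_card _ (finite_setOf_add_le hu hv _)]

end Slicing

theorem sum_range_sq_sub_two_mul_step (t : ℕ) :
    ∑ x ∈ range ((t + 2) / 2 + 1), (t + 2 - 2 * x + 1) ^ 2 =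
      ∑ x ∈ range (t / 2 + 1), (t - 2 * x + 1) ^ 2 + (t + 3) ^ 2 := by
  rw [show (t + 2) / 2 + 1 = t / 2 + 1 + 1 by omega, sum_range_succ']
  congr 1
  refine sum_congr rfl fun x _ => ?_
  congr 2
  omega

theorem six_mul_sum_range_sq_sub_two_mul (t : ℕ) :
    6 * ∑ x ∈ range (t / 2 + 1), (t - 2 * x + 1) ^ 2 = (t + 1) * (t + 2) * (t + 3) := by
  induction t using Nat.twoStepInduction with
  | zero => simp
  | one => simp
  | more t ih _ =>
    rw [sum_range_sq_sub_two_mul_step, mul_add, ih]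
    ring

/-- If the triangle with vertices `(0,0),(a,0),(0,b)` has Ehrhart polynomial
`(t+1)²`, then the tetrahedron with vertices `(0,0,0),(1/2,0,0),(0,a,0),(0,0,b)`
has Ehrhart polynomial `t³/6 + t² + 11t/6 + 1`. -/
theorem stmt_18 (a b : ℝ) (ha : 0 < a) (hb : 0 < b)
    (htri : ∀ t : ℕ, 0 < t → ehrhart2 (1 / a) (1 / b) t = (t + 1) ^ 2) :
    ∀ t : ℕ, 0 < t →
      6 * ehrhart3 2 (1 / a) (1 / b) t = t ^ 3 + 6 * t ^ 2 + 11 * t + 6 := by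
  have ha' : 0 < 1 / a := by positivity
  have hb' : 0 < 1 / b := by positivity
  have htri' (s : ℕ) : ehrhart2 (1 / a) (1 / b) s = (s + 1) ^ 2 := by
    rcases s.eq_zero_or_pos with rfl | hs
    · simpa using ehrhart2_zero ha' hb'
    · exact htri s hs
  intro t _
  rw [show (2 : ℝ) = (2 : ℕ) by norm_num, ehrhart3_eq_sum_ehrhart2 ha' hb' two_pos]
  simp only [htri']
  rw [six_mul_sum_range_sq_sub_two_mul]
  ring
end
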